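/- Let n ≥ 2 and let a_1, …, a_{3n} be positive integers with Σ_i a_i = nB and B/4 < a_i < B/2 for every i. Define an instance of Seat Arrangement with agents P = P_T ∪ P_A ∪ {p_r}, where P_T = {p_{t_1}, …, p_{t_n}}, P_A = {p_{a_1}, …, p_{a_{3n}}}, and p_r is a root agent; preferences: f_{p_t}(p_r) = B and f_{p_t}(p_{a_i}) = a_i for every p_t ∈ P_T and every i, and all other preferences are 0. Let the seat graph be the tree on 4n + 1 vertices with a root vertex v_r having n children, each child having exactly 3 leaf children. Then an envy-free arrangement exists if and only if {a_1, …, a_{3n}} can be partitioned into n triples each summing to B. -/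

import Mathlib

open scoped Classical

noncomputable section

namespace SeatArrangement

variable {P V : Type*}

/-- The utility of agent `p` under arrangement `π`:
the sum, over the seat-graph neighbors `v` of `π p`, of `p`'s preference for the agent seated
at `v`. -/
def utility [Fintype V] (G : SimpleGraph V) (f : P → P → ℝ) (π : P ≃ V) (p : P) : ℝ :=
  ∑ v : V, if G.Adj (π p) v then f p (π.symm v) else 0

/-- The social welfare of an arrangement: the sum of the utilities of all agents. -/
def sw [Fintype P] [Fintype V] (G : SimpleGraph V) (f : P → P → ℝ) (π : P ≃ V) : ℝ :=
  ∑ p : P, utility G f π p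

/-- The `(p,q)`-swap arrangement of `π`. -/
def swapArr (π : P ≃ V) (p q : P) : P ≃ V := (Equiv.swap p q).trans π

/-- `{p, q}` is a blocking pair for `π`: both agents strictly improve by swapping seats. -/
def blocking [Fintype V] (G : SimpleGraph V) (f : P → P → ℝ) (π : P ≃ V) (p q : P) : Prop :=
  p ≠ q ∧ utility G f π p < utility G f (swapArr π p q) p
        ∧ utility G f π q < utility G f (swapArr π p q) q

/-- An arrangement is stable if it has no blocking pair. -/
def stable [Fintype V] (G : SimpleGraph V) (f : P → P → ℝ) (π : P ≃ V) : Prop :=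
  ∀ p q : P, ¬ blocking G f π p q

/-- An arrangement is envy-free if no agent would strictly improve by taking
another agent's seat (via a swap). -/
def envyFree [Fintype V] (G : SimpleGraph V) (f : P → P → ℝ) (π : P ≃ V) : Prop :=
  ∀ p q : P, p ≠ q → utility G f (swapArr π p q) p ≤ utility G f π p

/-- The least utility of an agent under `π` (for a finite nonempty set of agents, the
infimum of the range of utilities is the minimum utility). -/
def minUtil [Fintype V] (G : SimpleGraph V) (f : P → P → ℝ) (π : P ≃ V) : ℝ :=
  sInf (Set.range (utility G f π))

/-- A maximin arrangement maximizes the least utility of an agent. -/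
def maximin [Fintype V] (G : SimpleGraph V) (f : P → P → ℝ) (πf : P ≃ V) : Prop :=
  ∀ π : P ≃ V, minUtil G f π ≤ minUtil G f πf

/-- A maximum arrangement maximizes the social welfare. -/
def maximum [Fintype P] [Fintype V] (G : SimpleGraph V) (f : P → P → ℝ) (πm : P ≃ V) : Prop :=
  ∀ π : P ≃ V, sw G f π ≤ sw G f πm

end SeatArrangement

open SeatArrangement

/-- Agents for STATEMENT 13: `Fin n` are the triple agents `P_T`, `Fin (3n)` are the
element agents `P_A`, and `Unit` is the root agent `p_r`. -/
abbrev Agents13 (n : ℕ) := Fin n ⊕ (Fin (3 * n) ⊕ Unit)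

/-- Seats for STATEMENT 13: a root vertex, `n` inner vertices, and `3n` leaves
(`Fin n × Fin 3`). -/
abbrev Seats13 (n : ℕ) := Unit ⊕ (Fin n ⊕ (Fin n × Fin 3))

/-- Preferences for STATEMENT 13: each `p_t ∈ P_T` has preference `B` for the root agent and
preference `a_i` for the element agent `p_{a_i}`; all other preferences are 0. -/
def prefs13 (n B : ℕ) (a : Fin (3 * n) → ℕ) : Agents13 n → Agents13 n → ℝ
  | .inl _, .inr (.inr _) => B
  | .inl _, .inr (.inl i) => a i
  | _, _ => 0

/-- The seat graph for STATEMENT 13: the tree on `4n + 1` vertices whose root `v_r` has `n`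
children, each child having exactly three leaf children. -/
def seat13 (n : ℕ) : SimpleGraph (Seats13 n) where
  Adj x y :=
    match x, y with
    | .inl _, .inr (.inl _) => True
    | .inr (.inl _), .inl _ => True
    | .inr (.inl i), .inr (.inr l) => i = l.1
    | .inr (.inr l), .inr (.inl i) => i = l.1
    | _, _ => False
  symm := by
    constructor
    rintro (x | x | x) (y | y | y) h <;> simp_all
  loopless := by
    constructor
    rintro (x | x | x) h <;> simp_all

/-!
Only the triple agents have non-zero preferences, and they all value the other agents by the same
function `val13` (`0` on triple agents, `a i` on element agents, `B` on the root agent). As a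
triple agent values itself at `0`, taking the seat `v` gives it the `val13`-value of the
neighbourhood of `v`, plus the value of the agent it displaces if `v` is adjacent to its own seat.
So in an envy-free arrangement all triple agents enjoy the same, maximal, seat value, which is at
least `B` because the root agent has a neighbour; in particular a triple agent on a leaf sits below
the root agent. If the root agent is on the root, the triple agents therefore fill the inner seats,
and the total value `(n + 1) B` forces every inner seat to be worth `2 B`: the leaves below each
inner seat hold a triple summing to `B`. If the root agent is on an inner seat or on a leaf, the
same count, together with a pigeonhole argument on the `n` triple agents, is contradictory (this is
where `B / 4 < a i` and `2 ≤ n` enter). Conversely, seating the root agent on the root, the triple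
agents on the inner seats and the triples of a partition below them is envy-free, every triple
agent getting `2 B`.
-/

theorem Set.range_subset_range_of_injective {α β : Type*} [Finite α] {f g : α → β}
    (hf : Function.Injective f) (h : Set.range f ⊆ Set.range g) : Set.range g ⊆ Set.range f := by
  choose ψ hψ using fun x => h (Set.mem_range_self x)
  have hψ_surj : Function.Surjective ψ :=
    Finite.injective_iff_surjective.1 fun x y hxy => hf (by rw [← hψ, hxy, hψ])
  rintro _ ⟨b, rfl⟩
  obtain ⟨x, rfl⟩ := hψ_surj b
  exact ⟨x, (hψ x).symm⟩

theorem Equiv.sum_filter_fst_symm_eq {α β γ M : Type*} [Fintype α] [Fintype β] [Fintype γ]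
    [DecidableEq β] [AddCommMonoid M] (e : β × γ ≃ α) (f : α → M) (b : β) :
    ∑ x ∈ Finset.univ.filter (fun x => (e.symm x).1 = b), f x = ∑ c, f (e (b, c)) := by
  rw [Finset.sum_filter, ← e.sum_comp, Fintype.sum_prod_type]
  simp

theorem exists_fiberwise_iff_exists_equiv {α β M : Type*} [Fintype α] [Fintype β]
    [DecidableEq β] [AddCommMonoid M] (f : α → M) (k : ℕ) (s : M) :
    (∃ g : α → β, ∀ b, (Finset.univ.filter fun x => g x = b).card = k ∧
      ∑ x ∈ Finset.univ.filter (fun x => g x = b), f x = s) ↔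
    ∃ e : β × Fin k ≃ α, ∀ b, ∑ j, f (e (b, j)) = s := by
  constructor
  · rintro ⟨g, hg⟩
    have hfiber (b : β) : Fintype.card {x // g x = b} = k := by
      rw [Fintype.card_subtype]; exact (hg b).1
    let e : β × Fin k ≃ α := ((Equiv.sigmaFiberEquiv g).symm.trans
      ((Equiv.sigmaCongrRight fun b => Fintype.equivFinOfCardEq (hfiber b)).trans
        (Equiv.sigmaEquivProd β (Fin k)))).symm
    refine ⟨e, fun b => ?_⟩
    rw [← e.sum_filter_fst_symm_eq]
    exact (hg b).2
  · rintro ⟨e, he⟩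
    refine ⟨fun x => (e.symm x).1, fun b => ⟨?_, ?_⟩⟩
    · rw [Finset.card_eq_sum_ones, e.sum_filter_fst_symm_eq]; simp
    · rw [e.sum_filter_fst_symm_eq, he]

namespace SeatArrangement

variable {P V : Type*} [Fintype V]

def seatValue (G : SimpleGraph V) (g : P → ℝ) (π : P ≃ V) (v : V) : ℝ :=
  ∑ w : V, if G.Adj v w then g (π.symm w) else 0

theorem utility_eq_seatValue (G : SimpleGraph V) (f : P → P → ℝ) (π : P ≃ V) (p : P) :
    utility G f π p = seatValue G (f p) π (π p) := rfl

theorem le_seatValue_of_adj (G : SimpleGraph V) {g : P → ℝ} (hg : ∀ p, 0 ≤ g p) (π : P ≃ V)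
    {v w : V} (hvw : G.Adj v w) : g (π.symm w) ≤ seatValue G g π v := by
  classical
  unfold seatValue
  simpa [hvw] using Finset.single_le_sum (f := fun w => if G.Adj v w then g (π.symm w) else 0)
    (fun w _ => by split_ifs <;> simp [hg]) (Finset.mem_univ w)

theorem utility_swapArr_self (G : SimpleGraph V) (f : P → P → ℝ) (π : P ≃ V) {p q : P}
    (hp : f p p = 0) :
    utility G f (swapArr π p q) p =
      seatValue G (f p) π (π q) + if G.Adj (π p) (π q) then f p q else 0 := by
  classical
  have hterm (w : V) : (if G.Adj (π q) w then f p ((swapArr π p q).symm w) else 0) =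
      (if G.Adj (π q) w then f p (π.symm w) else 0) +
        if w = π p then (if G.Adj (π p) (π q) then f p q else 0) else 0 := by
    by_cases hwp : w = π p
    · subst hwp
      simp [swapArr, hp, G.adj_comm]
    by_cases hwq : w = π q
    · subst hwq
      simp [hwp]
    have : π.symm w ≠ p := fun h => hwp (by rw [← h, Equiv.apply_symm_apply])
    have : π.symm w ≠ q := fun h => hwq (by rw [← h, Equiv.apply_symm_apply])
    simp [swapArr, Equiv.swap_apply_of_ne_of_ne, *]
  have hseat : swapArr π p q p = π q := by simp [swapArr]
  rw [utility, hseat, seatValue]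
  simp only [hterm, Finset.sum_add_distrib, Finset.sum_ite_eq', Finset.mem_univ, if_true]

theorem envyFree_iff_seatValue (G : SimpleGraph V) {f : P → P → ℝ} (hf : ∀ p, f p p = 0)
    (π : P ≃ V) :
    envyFree G f π ↔ ∀ p q, p ≠ q →
      seatValue G (f p) π (π q) + (if G.Adj (π p) (π q) then f p q else 0) ≤
        seatValue G (f p) π (π p) := by
  refine forall₂_congr fun p q => imp_congr_right fun hpq => ?_
  rw [utility_swapArr_self G f π (hf p), utility_eq_seatValue]

end SeatArrangement

section Seat13

variable {n : ℕ} {P : Type*}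

theorem seat13_adj_inner_leaf (i i' : Fin n) (j : Fin 3) :
    (seat13 n).Adj (.inr (.inl i)) (.inr (.inr (i', j))) ↔ i = i' := Iff.rfl

theorem seat13_adj_leaf_inner (i i' : Fin n) (j : Fin 3) :
    (seat13 n).Adj (.inr (.inr (i, j))) (.inr (.inl i')) ↔ i' = i := Iff.rfl

theorem seatValue_seat13_root (g : P → ℝ) (π : P ≃ Seats13 n) :
    seatValue (seat13 n) g π (.inl ()) = ∑ i, g (π.symm (.inr (.inl i))) := by
  simp [seatValue, seat13, Fintype.sum_sum_type]

theorem seatValue_seat13_inner (g : P → ℝ) (π : P ≃ Seats13 n) (i : Fin n) :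
    seatValue (seat13 n) g π (.inr (.inl i)) =
      g (π.symm (.inl ())) + ∑ j, g (π.symm (.inr (.inr (i, j)))) := by
  simp only [seatValue, Fintype.sum_sum_type, Fintype.sum_prod_type, seat13_adj_inner_leaf]
  simp [seat13]

theorem seatValue_seat13_leaf (g : P → ℝ) (π : P ≃ Seats13 n) (i : Fin n) (j : Fin 3) :
    seatValue (seat13 n) g π (.inr (.inr (i, j))) = g (π.symm (.inr (.inl i))) := by
  simp only [seatValue, Fintype.sum_sum_type, seat13_adj_leaf_inner]
  simp [seat13]

-- The occupant of the root is counted once per inner seat, every other agent exactly once.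
theorem seatValue_seat13_root_add_sum_inner [Fintype P] (g : P → ℝ) (π : P ≃ Seats13 n) :
    seatValue (seat13 n) g π (.inl ()) + ∑ i, seatValue (seat13 n) g π (.inr (.inl i)) =
      ∑ p, g p + ((n : ℝ) - 1) * g (π.symm (.inl ())) := by
  simp only [seatValue_seat13_root, seatValue_seat13_inner, Finset.sum_add_distrib]
  rw [← π.symm.sum_comp]
  simp [Fintype.sum_sum_type, Fintype.sum_prod_type]
  ring

theorem seat13_exists_adj (hn : 0 < n) (v : Seats13 n) : ∃ w, (seat13 n).Adj w v := by
  rcases v with ⟨⟩ | i | ⟨i, j⟩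
  · exact ⟨.inr (.inl ⟨0, hn⟩), trivial⟩
  · exact ⟨.inl (), trivial⟩
  · exact ⟨.inr (.inl i), rfl⟩

end Seat13

section Reduction

variable {n B : ℕ} {a : Fin (3 * n) → ℕ}

def val13 (B : ℕ) (a : Fin (3 * n) → ℕ) : Agents13 n → ℝ
  | .inl _ => 0
  | .inr (.inl i) => a i
  | .inr (.inr _) => B

theorem prefs13_inl (t : Fin n) : prefs13 n B a (.inl t) = val13 B a := by
  funext q
  rcases q with _ | _ | _ <;> rfl

theorem prefs13_inr (x : Fin (3 * n) ⊕ Unit) : prefs13 n B a (.inr x) = 0 := by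
  funext q
  rcases x with _ | _ <;> rcases q with _ | _ | _ <;> rfl

theorem val13_nonneg (p : Agents13 n) : 0 ≤ val13 B a p := by
  rcases p with _ | _ | _ <;> simp [val13]

theorem sum_val13 (hsum : ∑ i, a i = n * B) : ∑ p, val13 B a p = (n + 1) * B := by
  simp only [Fintype.sum_sum_type, val13, Finset.sum_const_zero, Finset.univ_unique,
    Finset.sum_singleton]
  rw [← Nat.cast_sum, hsum]
  push_cast
  ring

theorem B_pos (hn : 0 < n) (hrange : ∀ i, (B : ℝ) / 4 < a i ∧ (a i : ℝ) < B / 2) :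
    0 < (B : ℝ) := by
  have := hrange ⟨0, by omega⟩
  linarith

theorem eq_root_of_le_val13 (hB : 0 < (B : ℝ)) (hrange : ∀ i, (a i : ℝ) < B / 2)
    {p : Agents13 n} (hp : B ≤ val13 B a p) : p = .inr (.inr ()) := by
  rcases p with _ | i | ⟨⟩
  · simp only [val13] at hp; linarith
  · have := hrange i
    simp only [val13] at hp; linarith
  · rfl

theorem quarter_le_val13 (hrange : ∀ i, (B : ℝ) / 4 < a i) {p : Agents13 n}
    (hp : ∀ t, p ≠ .inl t) : (B : ℝ) / 4 ≤ val13 B a p := by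
  rcases p with t | i | ⟨⟩
  · exact absurd rfl (hp t)
  · exact (hrange i).le
  · simp only [val13]; linarith [(B.cast_nonneg : (0 : ℝ) ≤ B)]

theorem envyFree13_iff (π : Agents13 n ≃ Seats13 n) :
    envyFree (seat13 n) (prefs13 n B a) π ↔ ∀ (t : Fin n) q, .inl t ≠ q →
      seatValue (seat13 n) (val13 B a) π (π q) +
          (if (seat13 n).Adj (π (.inl t)) (π q) then val13 B a q else 0) ≤
        seatValue (seat13 n) (val13 B a) π (π (.inl t)) := by
  have hdiag (p : Agents13 n) : prefs13 n B a p p = 0 := by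
    rcases p with t | x
    · simp [prefs13_inl, val13]
    · simp [prefs13_inr]
  rw [envyFree_iff_seatValue _ hdiag]
  constructor
  · intro h t q hq
    simpa [prefs13_inl] using h (.inl t) q hq
  · rintro h (t | x) q hq
    · simpa [prefs13_inl] using h t q hq
    · simp [prefs13_inr, seatValue]

def standardArrangement13 (e : Fin n × Fin 3 ≃ Fin (3 * n)) : Agents13 n ≃ Seats13 n where
  toFun
    | .inl t => .inr (.inl t)
    | .inr (.inl i) => .inr (.inr (e.symm i))
    | .inr (.inr _) => .inl ()
  invFun
    | .inl _ => .inr (.inr ())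
    | .inr (.inl t) => .inl t
    | .inr (.inr x) => .inr (.inl (e x))
  left_inv := by rintro (t | i | ⟨⟩) <;> simp
  right_inv := by rintro (⟨⟩ | t | x) <;> simp

theorem envyFree_standardArrangement13 (hrange : ∀ i, (a i : ℝ) < B / 2)
    (e : Fin n × Fin 3 ≃ Fin (3 * n)) (he : ∀ t, ∑ j, a (e (t, j)) = B) :
    envyFree (seat13 n) (prefs13 n B a) (standardArrangement13 e) := by
  set π := standardArrangement13 e
  have hB : (0 : ℝ) ≤ B := B.cast_nonneg
  have hinner (t : Fin n) : seatValue (seat13 n) (val13 B a) π (.inr (.inl t)) = 2 * B := by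
    have : (∑ j, a (e (t, j)) : ℝ) = B := by exact_mod_cast he t
    rw [seatValue_seat13_inner]
    change (B : ℝ) + ∑ j, (a (e (t, j)) : ℝ) = _
    rw [this]; ring
  rw [envyFree13_iff]
  rintro t (t' | i | ⟨⟩) hq
  · change seatValue _ _ π (.inr (.inl t')) + (if (seat13 n).Adj (.inr (.inl t)) (.inr (.inl t'))
      then _ else 0) ≤ seatValue _ _ π (.inr (.inl t))
    rw [hinner, hinner]
    split_ifs <;> simp [val13]
  · have := hrange i
    change seatValue _ _ π (.inr (.inr (e.symm i))) + (if (seat13 n).Adj (.inr (.inl t)) _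
      then (a i : ℝ) else 0) ≤ seatValue _ _ π (.inr (.inl t))
    rw [hinner, seatValue_seat13_leaf]
    change 0 + _ ≤ _
    split_ifs <;> linarith
  · change seatValue _ _ π (.inl ()) + (if (seat13 n).Adj (.inr (.inl t)) (.inl ())
      then (B : ℝ) else 0) ≤ seatValue _ _ π (.inr (.inl t))
    rw [hinner, seatValue_seat13_root]
    change ∑ _ : Fin n, (0 : ℝ) + _ ≤ _
    rw [Finset.sum_const_zero, zero_add]
    split_ifs <;> linarith

variable {π : Agents13 n ≃ Seats13 n}

theorem seatValue_le_of_envyFree (hEF : envyFree (seat13 n) (prefs13 n B a) π) (t : Fin n)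
    (v : Seats13 n) :
    seatValue (seat13 n) (val13 B a) π v ≤ seatValue (seat13 n) (val13 B a) π (π (.inl t)) := by
  by_cases hv : .inl t = π.symm v
  · rw [hv, π.apply_symm_apply]
  have := (envyFree13_iff π).1 hEF t _ hv
  rw [π.apply_symm_apply] at this
  have : 0 ≤ if (seat13 n).Adj (π (.inl t)) v then val13 B a (π.symm v) else 0 := by
    split_ifs <;> simp [val13_nonneg]
  linarith

theorem seatValue_add_le_of_envyFree_of_adj (hEF : envyFree (seat13 n) (prefs13 n B a) π)
    {t : Fin n} {v : Seats13 n} (hadj : (seat13 n).Adj (π (.inl t)) v) :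
    seatValue (seat13 n) (val13 B a) π v + val13 B a (π.symm v) ≤
      seatValue (seat13 n) (val13 B a) π (π (.inl t)) := by
  have hv : .inl t ≠ π.symm v := by
    intro h
    rw [h, π.apply_symm_apply] at hadj
    exact (seat13 n).loopless.irrefl _ hadj
  simpa [hadj] using (envyFree13_iff π).1 hEF t _ hv

theorem le_seatValue_of_envyFree (hEF : envyFree (seat13 n) (prefs13 n B a) π) (hn : 0 < n)
    (t : Fin n) : (B : ℝ) ≤ seatValue (seat13 n) (val13 B a) π (π (.inl t)) := by
  obtain ⟨w, hw⟩ := seat13_exists_adj hn (π (.inr (.inr ())))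
  calc (B : ℝ) = val13 B a (π.symm (π (.inr (.inr ())))) := by simp [val13]
    _ ≤ seatValue (seat13 n) (val13 B a) π w := le_seatValue_of_adj _ val13_nonneg π hw
    _ ≤ _ := seatValue_le_of_envyFree hEF t w

theorem root_above_of_envyFree_of_leaf (hEF : envyFree (seat13 n) (prefs13 n B a) π)
    (hn : 0 < n) (hrange : ∀ i, (B : ℝ) / 4 < a i ∧ (a i : ℝ) < B / 2) {t : Fin n} {i : Fin n}
    {j : Fin 3} (ht : π (.inl t) = .inr (.inr (i, j))) :
    π.symm (.inr (.inl i)) = .inr (.inr ()) := by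
  have := le_seatValue_of_envyFree hEF hn t
  rw [ht, seatValue_seat13_leaf] at this
  exact eq_root_of_le_val13 (B_pos hn hrange) (fun i => (hrange i).2) this

theorem seatValue_root_eq_zero_of_triples (hfull : ∀ i, ∃ t, π (.inl t) = .inr (.inl i)) :
    seatValue (seat13 n) (val13 B a) π (.inl ()) = 0 := by
  rw [seatValue_seat13_root]
  refine Finset.sum_eq_zero fun i _ => ?_
  obtain ⟨t, ht⟩ := hfull i
  rw [← ht, π.symm_apply_apply]
  rfl

theorem mul_seatValue_inner_of_envyFree (hEF : envyFree (seat13 n) (prefs13 n B a) π)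
    (hsum : ∑ i, a i = n * B) (hfull : ∀ i, ∃ t, π (.inl t) = .inr (.inl i)) (i : Fin n) :
    n * seatValue (seat13 n) (val13 B a) π (.inr (.inl i)) =
      (n + 1) * B + (n - 1) * val13 B a (π.symm (.inl ())) := by
  have htotal := seatValue_seat13_root_add_sum_inner (val13 B a) π
  have hequal (i' : Fin n) : seatValue (seat13 n) (val13 B a) π (.inr (.inl i')) =
      seatValue (seat13 n) (val13 B a) π (.inr (.inl i)) := by
    obtain ⟨t, ht⟩ := hfull i
    obtain ⟨t', ht'⟩ := hfull i'
    rw [← ht, ← ht']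
    exact le_antisymm (seatValue_le_of_envyFree hEF t _) (seatValue_le_of_envyFree hEF t' _)
  simpa only [seatValue_root_eq_zero_of_triples hfull, hequal, Finset.sum_const, Finset.card_univ,
    Fintype.card_fin, nsmul_eq_mul, sum_val13 hsum, zero_add] using htotal

theorem seatValue_root_eq_of_triples_off {i : Fin n}
    (hfull : ∀ i', i' ≠ i → ∃ t, π (.inl t) = .inr (.inl i')) :
    seatValue (seat13 n) (val13 B a) π (.inl ()) = val13 B a (π.symm (.inr (.inl i))) := by
  rw [seatValue_seat13_root, Fintype.sum_eq_single i]
  intro i' hi'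
  obtain ⟨t, ht⟩ := hfull i' hi'
  rw [← ht, π.symm_apply_apply]
  rfl

theorem exists_triple_at_inner_of_forall (h : ∀ t, ∃ i, π (.inl t) = .inr (.inl i)) (i : Fin n) :
    ∃ t, π (.inl t) = .inr (.inl i) :=
  Set.range_subset_range_of_injective (g := fun i => (.inr (.inl i) : Seats13 n))
    (π.injective.comp Sum.inl_injective)
    (Set.range_subset_iff.2 fun t => (h t).imp fun _ => Eq.symm) (Set.mem_range_self i)

theorem exists_triple_at_root_and_inner_of_forall (i : Fin n)
    (hsub : ∀ t, π (.inl t) = .inl () ∨ ∃ i', i' ≠ i ∧ π (.inl t) = .inr (.inl i')) :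
    (∃ t, π (.inl t) = .inl ()) ∧ ∀ i', i' ≠ i → ∃ t, π (.inl t) = .inr (.inl i') := by
  set g := Function.update (fun i' => (.inr (.inl i') : Seats13 n)) i (.inl ())
  have hg : ∀ i', ∃ t, π (.inl t) = g i' := fun i' =>
    Set.range_subset_range_of_injective (π.injective.comp Sum.inl_injective)
      (Set.range_subset_iff.2 fun t => by
        rcases hsub t with h | ⟨i', hi', h⟩
        · exact ⟨i, by simp [g, h]⟩
        · exact ⟨i', by simp [g, hi', h]⟩) (Set.mem_range_self i')
  refine ⟨by simpa [g] using hg i, fun i' hi' => by simpa [g, hi'] using hg i'⟩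

theorem exists_equiv_of_envyFree_of_root_at_root (hEF : envyFree (seat13 n) (prefs13 n B a) π)
    (hn : 0 < n) (hrange : ∀ i, (B : ℝ) / 4 < a i ∧ (a i : ℝ) < B / 2)
    (hsum : ∑ i, a i = n * B) (hr : π (.inr (.inr ())) = .inl ()) :
    ∃ e : Fin n × Fin 3 ≃ Fin (3 * n), ∀ t, ∑ j, a (e (t, j)) = B := by
  have hr' : π.symm (.inl ()) = .inr (.inr ()) := by rw [← hr, π.symm_apply_apply]
  have htriple_inner (t : Fin n) : ∃ i, π (.inl t) = .inr (.inl i) := by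
    rcases ht : π (.inl t) with ⟨⟩ | i | ⟨i, j⟩
    · simpa using π.injective (ht.trans hr.symm)
    · exact ⟨i, rfl⟩
    · have := root_above_of_envyFree_of_leaf hEF hn hrange ht
      rw [← hr', π.symm_apply_eq, π.apply_symm_apply] at this
      simp at this
  have hfull := exists_triple_at_inner_of_forall htriple_inner
  have hinner (i : Fin n) : seatValue (seat13 n) (val13 B a) π (.inr (.inl i)) = 2 * B := by
    have := mul_seatValue_inner_of_envyFree hEF hsum hfull i
    rw [hr'] at this
    have : (0 : ℝ) < n := by exact_mod_cast hn
    simp only [val13] at *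
    nlinarith
  have hleaf (x : Fin n × Fin 3) : ∃ i, π.symm (.inr (.inr x)) = .inr (.inl i) := by
    rcases hx : π.symm (.inr (.inr x)) with t | i | ⟨⟩
    · obtain ⟨i, hi⟩ := htriple_inner t
      rw [π.symm_apply_eq] at hx
      simp [← hx] at hi
    · exact ⟨i, rfl⟩
    · rw [π.symm_apply_eq, hr] at hx
      simp at hx
  choose m hm using hleaf
  have hm_inj : Function.Injective m := fun x y hxy =>
    Sum.inr_injective (Sum.inr_injective (π.symm.injective ((hm x).trans (hxy ▸ (hm y).symm))))
  refine ⟨Equiv.ofBijective m ((Fintype.bijective_iff_injective_and_card m).2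
    ⟨hm_inj, by simp [mul_comm]⟩), fun t => ?_⟩
  have := hinner t
  rw [seatValue_seat13_inner, hr'] at this
  simp only [hm, val13] at this
  exact_mod_cast (by linarith : (∑ j, (a (m (t, j)) : ℝ)) = B)

theorem false_of_envyFree_of_root_at_inner (hEF : envyFree (seat13 n) (prefs13 n B a) π)
    (hn : 0 < n) (hrange : ∀ i, (B : ℝ) / 4 < a i ∧ (a i : ℝ) < B / 2)
    (hsum : ∑ i, a i = n * B) {i₀ : Fin n} (hr : π (.inr (.inr ())) = .inr (.inl i₀)) :
    False := by
  have hB := B_pos hn hrange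
  have hr' : π.symm (.inr (.inl i₀)) = .inr (.inr ()) := by rw [← hr, π.symm_apply_apply]
  -- A triple agent next to the root agent and getting only `B` caps every seat value at `B` and
  -- that of the root agent's seat at `0`: too little for the total value.
  have key (t : Fin n) (hadj : (seat13 n).Adj (π (.inl t)) (.inr (.inl i₀)))
      (hM : seatValue (seat13 n) (val13 B a) π (π (.inl t)) = B) : False := by
    have h₀ := seatValue_add_le_of_envyFree_of_adj hEF hadj
    rw [hr', hM] at h₀
    have hle (v : Seats13 n) : seatValue (seat13 n) (val13 B a) π v ≤ B :=
      hM ▸ seatValue_le_of_envyFree hEF t v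
    have hinner : ∑ i, seatValue (seat13 n) (val13 B a) π (.inr (.inl i)) + B ≤ n * B :=
      calc ∑ i, seatValue (seat13 n) (val13 B a) π (.inr (.inl i)) + B
          = ∑ i, (seatValue (seat13 n) (val13 B a) π (.inr (.inl i)) +
              if i = i₀ then (B : ℝ) else 0) := by
            rw [Finset.sum_add_distrib, Fintype.sum_ite_eq']
        _ ≤ ∑ _ : Fin n, (B : ℝ) := Finset.sum_le_sum fun i _ => by
            split_ifs with h
            · subst h; simpa [val13] using h₀
            · simpa using hle _
        _ = n * B := by simp
    have htotal := seatValue_seat13_root_add_sum_inner (val13 B a) π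
    rw [sum_val13 hsum] at htotal
    have := hle (.inl ())
    have := val13_nonneg (B := B) (a := a) (π.symm (.inl ()))
    have : (1 : ℝ) ≤ n := by exact_mod_cast hn
    nlinarith
  by_cases hleaf : ∃ t j, π (.inl t) = .inr (.inr (i₀, j))
  · obtain ⟨t, j, ht⟩ := hleaf
    refine key t (by rw [ht]; exact (seat13_adj_leaf_inner i₀ i₀ j).2 rfl) ?_
    rw [ht, seatValue_seat13_leaf, hr']
    rfl
  push Not at hleaf
  obtain ⟨⟨t, ht⟩, hfull⟩ := exists_triple_at_root_and_inner_of_forall i₀ fun t => by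
    rcases h : π (.inl t) with ⟨⟩ | i | ⟨i, j⟩
    · exact .inl rfl
    · refine .inr ⟨i, ?_, rfl⟩
      rintro rfl
      simpa using π.injective (h.trans hr.symm)
    · have := root_above_of_envyFree_of_leaf hEF hn hrange h
      obtain rfl : i = i₀ := by simpa using π.symm.injective (this.trans hr'.symm)
      exact absurd h (hleaf t j)
  refine key t (by rw [ht]; trivial) ?_
  rw [ht, seatValue_root_eq_of_triples_off hfull, hr']
  rfl

theorem false_of_envyFree_of_root_at_leaf (hEF : envyFree (seat13 n) (prefs13 n B a) π)
    (hn : 2 ≤ n) (hrange : ∀ i, (B : ℝ) / 4 < a i ∧ (a i : ℝ) < B / 2)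
    (hsum : ∑ i, a i = n * B) {i₀ : Fin n} {j₀ : Fin 3}
    (hr : π (.inr (.inr ())) = .inr (.inr (i₀, j₀))) : False := by
  have hn₀ : 0 < n := by omega
  have hB := B_pos hn₀ hrange
  have hr' : π.symm (.inr (.inr (i₀, j₀))) = .inr (.inr ()) := by rw [← hr, π.symm_apply_apply]
  have hnot_leaf (t : Fin n) (i : Fin n) (j : Fin 3) : π (.inl t) ≠ .inr (.inr (i, j)) := by
    intro h
    have := root_above_of_envyFree_of_leaf hEF hn₀ hrange h
    rw [π.symm_apply_eq, hr] at this
    simp at this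
  have hquarter (v : Seats13 n) (hv : ∀ t, π (.inl t) ≠ v) : (B : ℝ) / 4 ≤ val13 B a (π.symm v) :=
    quarter_le_val13 (fun i => (hrange i).1) fun t h => hv t (by rw [← h, π.apply_symm_apply])
  by_cases hroot : ∃ t, π (.inl t) = .inl ()
  · obtain ⟨t₁, ht₁⟩ := hroot
    have hM := le_seatValue_of_envyFree hEF hn₀ t₁
    rw [ht₁] at hM
    obtain ⟨i₁, hi₁⟩ : ∃ i₁, ∀ t, π (.inl t) ≠ .inr (.inl i₁) := by
      by_contra! h
      rw [seatValue_root_eq_zero_of_triples h] at hM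
      linarith
    obtain ⟨-, hfull⟩ := exists_triple_at_root_and_inner_of_forall i₁ fun t => by
      rcases h : π (.inl t) with ⟨⟩ | i | ⟨i, j⟩
      · exact .inl rfl
      · exact .inr ⟨i, by rintro rfl; exact hi₁ t h, rfl⟩
      · exact absurd h (hnot_leaf t i j)
    rw [seatValue_root_eq_of_triples_off hfull] at hM
    have := eq_root_of_le_val13 hB (fun i => (hrange i).2) hM
    rw [π.symm_apply_eq, hr] at this
    simp at this
  push Not at hroot
  have hfull := exists_triple_at_inner_of_forall fun t => by
    rcases h : π (.inl t) with ⟨⟩ | i | ⟨i, j⟩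
    · exact absurd h (hroot t)
    · exact ⟨i, rfl⟩
    · exact absurd h (hnot_leaf t i j)
  have hx := hquarter (.inl ()) hroot
  have hL : 3 * (B : ℝ) / 2 ≤ ∑ j, val13 B a (π.symm (.inr (.inr (i₀, j)))) := by
    have := Finset.single_le_sum (f := fun j => val13 B a (π.symm (.inr (.inr (i₀, j)))) - B / 4)
      (fun j _ => sub_nonneg.2 (hquarter _ fun t => hnot_leaf t i₀ j)) (Finset.mem_univ j₀)
    simp only [hr', Finset.sum_sub_distrib, Finset.sum_const, Finset.card_univ, Fintype.card_fin,
      nsmul_eq_mul] at this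
    change (B : ℝ) - B / 4 ≤ _ at this
    linarith
  have htotal := mul_seatValue_inner_of_envyFree hEF hsum hfull i₀
  rw [seatValue_seat13_inner] at htotal
  have : (2 : ℝ) ≤ n := by exact_mod_cast hn
  nlinarith

end Reduction

theorem envyFree_iff_three_partition_general (n B : ℕ) (hn : 2 ≤ n)
    (a : Fin (3 * n) → ℕ)
    (hsum : ∑ i, a i = n * B)
    (hrange : ∀ i, (B : ℝ) / 4 < (a i : ℝ) ∧ (a i : ℝ) < (B : ℝ) / 2) :
    (∃ π : Agents13 n ≃ Seats13 n, envyFree (seat13 n) (prefs13 n B a) π) ↔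
    (∃ g : Fin (3 * n) → Fin n, ∀ t : Fin n,
      (Finset.univ.filter fun i => g i = t).card = 3 ∧
      (∑ i ∈ Finset.univ.filter fun i => g i = t, a i) = B) := by
  rw [exists_fiberwise_iff_exists_equiv]
  constructor
  · rintro ⟨π, hEF⟩
    rcases hr : π (.inr (.inr ())) with ⟨⟩ | i₀ | ⟨i₀, j₀⟩
    · exact exists_equiv_of_envyFree_of_root_at_root hEF (by omega) hrange hsum hr
    · exact (false_of_envyFree_of_root_at_inner hEF (by omega) hrange hsum hr).elim
    · exact (false_of_envyFree_of_root_at_leaf hEF hn hrange hsum hr).elim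
  · rintro ⟨e, he⟩
    exact ⟨_, envyFree_standardArrangement13 (fun i => (hrange i).2) e he⟩

/-- with `n ≥ 2`, positive integers `a_1, …, a_{3n}` summing to `nB` with
`B/4 < a_i < B/2`, the above instance has an envy-free arrangement if and only if
`{a_1, …, a_{3n}}` can be partitioned into `n` triples each summing to `B`. -/
theorem envyFree_iff_three_partition (n B : ℕ) (hn : 2 ≤ n)
    (a : Fin (3 * n) → ℕ) (hpos : ∀ i, 0 < a i)
    (hsum : ∑ i, a i = n * B)
    (hrange : ∀ i, (B : ℝ) / 4 < (a i : ℝ) ∧ (a i : ℝ) < (B : ℝ) / 2) :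
    (∃ π : Agents13 n ≃ Seats13 n, envyFree (seat13 n) (prefs13 n B a) π) ↔
    (∃ g : Fin (3 * n) → Fin n, ∀ t : Fin n,
      (Finset.univ.filter fun i => g i = t).card = 3 ∧
      (∑ i ∈ Finset.univ.filter fun i => g i = t, a i) = B) :=
  envyFree_iff_three_partition_general n B hn a hsum hrange
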